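/- arXiv:1406.4566 — 2 statements merged into one kernel-verified Lean document; each statement's English description precedes it below -/
import Mathlib

section
/- Let $P, Q, R \in \mathbb{R}^{k \times k}$ be invertible matrices and define $E_{ac} = P$, $E_{ab} = Q$, $E_{bc} = R$ with $P = Q \, E_{bb}^{-1} \, R$ for an invertible symmetric positive definite matrix $E_{bb}$. Define $d(X,Y,Z) = -\log\big( |\det(Z)| / \sqrt{\det(X)\det(Y)} \big)$ for symmetric positive definite $X, Y$. Then $d(E_{aa}, E_{cc}, E_{ac}) = d(E_{aa}, E_{bb}, E_{ab}) + d(E_{bb}, E_{cc}, E_{bc})$. -/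
open Matrix

/-- Additivity of the multivariate information distance in the square
full-rank case.  With `E_ac = E_ab * E_bb⁻¹ * E_bc` (Markov property) and all
matrices invertible, the distance
`d(X, Y, Z) = -log (|det Z| / √(det X * det Y))` is additive:
`d(E_aa, E_cc, E_ac) = d(E_aa, E_bb, E_ab) + d(E_bb, E_cc, E_bc)`. -/
theorem info_distance_additive_square_case
    {k : ℕ} (Eaa Ebb Ecc P Q R : Matrix (Fin k) (Fin k) ℝ)
    (hEaa : Eaa.PosDef) (hEbb : Ebb.PosDef) (hEcc : Ecc.PosDef)
    (hP : IsUnit P) (hQ : IsUnit Q) (hR : IsUnit R)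
    (hMarkov : P = Q * Ebb⁻¹ * R) :
    -Real.log (|P.det| / Real.sqrt (Eaa.det * Ecc.det)) =
      -Real.log (|Q.det| / Real.sqrt (Eaa.det * Ebb.det)) +
        -Real.log (|R.det| / Real.sqrt (Ebb.det * Ecc.det)) := by
  have ha : 0 < Eaa.det := hEaa.det_pos
  have hb : 0 < Ebb.det := hEbb.det_pos
  have hc : 0 < Ecc.det := hEcc.det_pos
  have hQ0 : Q.det ≠ 0 := by
    simpa [Matrix.isUnit_iff_isUnit_det, isUnit_iff_ne_zero] using hQ
  have hR0 : R.det ≠ 0 := by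
    simpa [Matrix.isUnit_iff_isUnit_det, isUnit_iff_ne_zero] using hR
  have hdetP : P.det = Q.det * Ebb.det⁻¹ * R.det := by
    rw [hMarkov, Matrix.det_mul, Matrix.det_mul, Matrix.det_nonsing_inv,
      Ring.inverse_eq_inv]
  have habs : |P.det| = |Q.det| * Ebb.det⁻¹ * |R.det| := by
    rw [hdetP, abs_mul, abs_mul, abs_of_pos (inv_pos.mpr hb)]
  have hsab : Real.sqrt (Eaa.det * Ebb.det) = Real.sqrt Eaa.det * Real.sqrt Ebb.det :=
    Real.sqrt_mul ha.le _
  have hsbc : Real.sqrt (Ebb.det * Ecc.det) = Real.sqrt Ebb.det * Real.sqrt Ecc.det :=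
    Real.sqrt_mul hb.le _
  have hsac : Real.sqrt (Eaa.det * Ecc.det) = Real.sqrt Eaa.det * Real.sqrt Ecc.det :=
    Real.sqrt_mul ha.le _
  have hsa : (0:ℝ) < Real.sqrt Eaa.det := Real.sqrt_pos.mpr ha
  have hsb : (0:ℝ) < Real.sqrt Ebb.det := Real.sqrt_pos.mpr hb
  have hsc : (0:ℝ) < Real.sqrt Ecc.det := Real.sqrt_pos.mpr hc
  have hbb : Real.sqrt Ebb.det * Real.sqrt Ebb.det = Ebb.det :=
    Real.mul_self_sqrt hb.le
  have harg : |P.det| / Real.sqrt (Eaa.det * Ecc.det) =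
      (|Q.det| / Real.sqrt (Eaa.det * Ebb.det)) *
        (|R.det| / Real.sqrt (Ebb.det * Ecc.det)) := by
    rw [habs, hsab, hsbc, hsac]
    field_simp
    ring_nf
    rw [sq, hbb]
  rw [harg, Real.log_mul (by positivity) (by positivity)]
  ring
end

section
/- Let $T = (V, E)$ be a finite tree with a path-additive positive edge distance $d$, observed set $X \subseteq V$, and surrogate map $\mathrm{Sg} : V \to X$ assigning each node its closest observed node (assumed unique). Then for any edge $(h_i, h_j) \in E$, either $\mathrm{Sg}(h_i) = \mathrm{Sg}(h_j)$, or $\mathrm{Sg}(h_i)$ and $\mathrm{Sg}(h_j)$ are connected by an edge in the minimum spanning tree of $X$ under the distance $d$ restricted to $X \times X$ (assuming the MST under $d|_{X\times X}$ is unique). -/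
open Classical

/-- `c` lies on the (unique) path from `a` to `b` in `G`. -/
def SimpleGraph.OnPath {V : Type*} (G : SimpleGraph V) (a b c : V) : Prop :=
  ∀ p : G.Walk a b, p.IsPath → c ∈ p.support

/-- The total weight of a graph `H` with respect to an edge weight `d`
(each edge is counted twice, once in each direction). -/
noncomputable def treeWeight {V : Type*} [Fintype V] (d : V → V → ℝ)
    (H : SimpleGraph V) : ℝ :=
  ∑ p : V × V, if H.Adj p.1 p.2 then d p.1 p.2 else 0

/-!
Deleting a latent edge `hi — hj` cuts the tree into two sides, and for `u` on the side of `hi`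
and `v` on the side of `hj` additivity gives `d u v = d u hi + d hi hj + d hj v`. If the
surrogates differ, each one lies on the side of its own endpoint (otherwise this decomposition
contradicts the strict minimality of one of them), so minimality makes `(Sg hi, Sg hj)` the
strictly lightest observed pair across the cut. By the cut property of minimum spanning trees,
proved by exchanging it for the crossing edge on the tree path between them, it is an edge of `M`.
-/

namespace SimpleGraph

variable {V : Type*} {G : SimpleGraph V}

lemma Preconnected.reachable_deleteEdges_or (hG : G.Preconnected) (a b v : V) :
    (G.deleteEdges {s(a, b)}).Reachable a v ∨ (G.deleteEdges {s(a, b)}).Reachable b v := by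
  by_contra h
  obtain ⟨p⟩ := hG a v
  obtain ⟨⟨⟨w, w'⟩, hww'⟩, -, hw, hw'⟩ :=
    p.exists_boundary_dart {c | (G.deleteEdges {s(a, b)}).Reachable a c ∨
      (G.deleteEdges {s(a, b)}).Reachable b c} (Or.inl .rfl) h
  apply hw'
  by_cases he : s(w, w') = s(a, b)
  · rcases Sym2.eq_iff.mp he with ⟨-, rfl⟩ | ⟨-, rfl⟩
    · exact Or.inr .rfl
    · exact Or.inl .rfl
  · have hadj : (G.deleteEdges {s(a, b)}).Adj w w' := deleteEdges_adj.mpr ⟨hww', by simpa using he⟩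
    exact hw.imp (·.trans hadj.reachable) (·.trans hadj.reachable)

lemma reachable_or_reachable_of_not_reachable {u v x y : V}
    (hcover : ∀ c, G.Reachable u c ∨ G.Reachable v c) (hxy : ¬G.Reachable x y) (c : V) :
    G.Reachable x c ∨ G.Reachable y c := by
  rcases hcover x with hx | hx <;> rcases hcover y with hy | hy <;>
    rcases hcover c with hc | hc
  all_goals first
    | exact absurd (hx.symm.trans hy) hxy
    | exact Or.inl (hx.symm.trans hc)
    | exact Or.inr (hy.symm.trans hc)

lemma deleteEdges_sup_edge_of_adj {u v : V} (huv : G.Adj u v) :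
    G.deleteEdges {s(u, v)} ⊔ edge u v = G := by
  ext a b
  simp only [sup_adj, deleteEdges_adj, Set.mem_singleton_iff, edge_adj]
  grind [Sym2.eq_iff, huv.symm, Adj.ne]

lemma IsAcyclic.not_reachable_deleteEdges (hG : G.IsAcyclic) {a b : V} (hab : G.Adj a b) :
    ¬(G.deleteEdges {s(a, b)}).Reachable a b :=
  isAcyclic_iff_forall_adj_isBridge.mp hG hab

lemma IsAcyclic.onPath_of_reachable_deleteEdges (hG : G.IsAcyclic) {a b u v : V} (hab : G.Adj a b)
    (hu : (G.deleteEdges {s(a, b)}).Reachable a u) (hv : (G.deleteEdges {s(a, b)}).Reachable b v) :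
    G.OnPath u v a ∧ G.OnPath u v b := by
  have hsep : ¬(G.deleteEdges {s(a, b)}).Reachable u v := fun huv =>
    hG.not_reachable_deleteEdges hab (hu.trans (huv.trans hv.symm))
  exact ⟨fun p _ => p.fst_mem_support_of_mem_edges (p.mem_edges_of_not_reachable_deleteEdges hsep),
    fun p _ => p.snd_mem_support_of_mem_edges (p.mem_edges_of_not_reachable_deleteEdges hsep)⟩

lemma IsAcyclic.not_reachable_deleteEdges_of_mem_edges (hG : G.IsAcyclic) {u v x y : V}
    {P : G.Walk x y} (hP : P.IsPath) (he : s(u, v) ∈ P.edges) :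
    ¬(G.deleteEdges {s(u, v)}).Reachable x y := by
  rw [reachable_deleteEdges_iff_exists_walk]
  rintro ⟨q, hq⟩
  have hqP : q.bypass = P :=
    congrArg Subtype.val ((hG.subsingleton_path x y).elim ⟨_, q.bypass_isPath⟩ ⟨P, hP⟩)
  exact hq (q.edges_bypass_subset_edges (hqP ▸ he))

lemma IsTree.deleteEdges_sup_edge {M : SimpleGraph V} (hM : M.IsTree) {u v x y : V}
    (hxy : ¬(M.deleteEdges {s(u, v)}).Reachable x y) :
    (M.deleteEdges {s(u, v)} ⊔ edge x y).IsTree := by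
  have hside := reachable_or_reachable_of_not_reachable
    (hM.connected.preconnected.reachable_deleteEdges_or u v) hxy
  have hne : x ≠ y := fun h => hxy (h ▸ .rfl)
  have hxy' : (M.deleteEdges {s(u, v)} ⊔ edge x y).Adj x y :=
    Or.inr ((edge_adj ..).mpr ⟨Or.inl ⟨rfl, rfl⟩, hne⟩)
  have hfrom_x : ∀ c, (M.deleteEdges {s(u, v)} ⊔ edge x y).Reachable x c := fun c =>
    (hside c).elim (·.mono le_sup_left) (hxy'.reachable.trans <| ·.mono le_sup_left)
  have : Nonempty V := ⟨x⟩
  exact ⟨.mk fun c c' => (hfrom_x c).symm.trans (hfrom_x c'),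
    (hM.isAcyclic.anti (deleteEdges_le _)).sup_edge_of_not_reachable hxy⟩

end SimpleGraph

section MinimumSpanningTree

open SimpleGraph

variable {W : Type*} [Fintype W] {w : W → W → ℝ}

lemma treeWeight_sup_edge {H : SimpleGraph W} {x y : W} (hxy : x ≠ y) (hH : ¬H.Adj x y) :
    treeWeight w (H ⊔ edge x y) = treeWeight w H + (w x y + w y x) := by
  have hedge : (∑ p : W × W, if (edge x y).Adj p.1 p.2 then w p.1 p.2 else 0) = w x y + w y x := by
    rw [Fintype.sum_eq_add (x, y) (y, x) (by simp [hxy])]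
    · simp [edge_adj, hxy, hxy.symm]
    · rintro ⟨a, b⟩ hab
      simp_all [edge_adj]
  rw [treeWeight, treeWeight, ← hedge, ← Finset.sum_add_distrib]
  refine Finset.sum_congr rfl fun ⟨a, b⟩ _ => ?_
  have hdisj : ¬(H.Adj a b ∧ (edge x y).Adj a b) := by
    rintro ⟨hab, hedge⟩
    rcases ((edge_adj ..).mp hedge).1 with ⟨rfl, rfl⟩ | ⟨rfl, rfl⟩
    exacts [hH hab, hH hab.symm]
  by_cases h1 : H.Adj a b <;> by_cases h2 : (edge x y).Adj a b <;> simp_all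

theorem SimpleGraph.IsTree.adj_of_forall_crossing_lt (hw : ∀ a b, w a b = w b a)
    {M : SimpleGraph W} (hM : M.IsTree) (hmin : ∀ H, H.IsTree → treeWeight w M ≤ treeWeight w H)
    {S : Set W} {x y : W} (hx : x ∈ S) (hy : y ∉ S)
    (hlt : ∀ u ∈ S, ∀ v ∉ S, (u, v) ≠ (x, y) → w x y < w u v) :
    M.Adj x y := by
  by_contra hxy
  obtain ⟨P, hP, -⟩ := hM.existsUnique_path x y
  obtain ⟨⟨⟨u, v⟩, huv⟩, hd, hu, hv⟩ := P.exists_boundary_dart S hx hy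
  have hsep := hM.isAcyclic.not_reachable_deleteEdges_of_mem_edges hP (List.mem_map_of_mem hd)
  have hM' := hM.deleteEdges_sup_edge hsep
  have hweight_M :=
    treeWeight_sup_edge (w := w) huv.ne (by simp : ¬(M.deleteEdges {s(u, v)}).Adj u v)
  rw [deleteEdges_sup_edge_of_adj huv] at hweight_M
  have hweight_M' :=
    treeWeight_sup_edge (w := w) (ne_of_mem_of_not_mem hx hy) (fun h => hsep h.reachable)
  have hlt' := hlt u hu v hv (by rintro ⟨⟩; exact hxy huv)
  linarith [hmin _ hM', hw x y, hw u v]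

end MinimumSpanningTree

section LatentTree

open SimpleGraph

variable {V : Type*} {G : SimpleGraph V} {d : V → V → ℝ}

lemma dist_self_eq_zero_of_onPath_additive
    (hadd : ∀ a b c : V, G.OnPath a b c → d a b = d a c + d c b) (a : V) : d a a = 0 := by
  have := hadd a a a fun p _ => p.start_mem_support
  linarith

lemma dist_eq_add_add_of_reachable_deleteEdges (hG : G.IsAcyclic)
    (hadd : ∀ a b c : V, G.OnPath a b c → d a b = d a c + d c b) {a b u v : V} (hab : G.Adj a b)
    (hu : (G.deleteEdges {s(a, b)}).Reachable a u) (hv : (G.deleteEdges {s(a, b)}).Reachable b v) :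
    d u v = d u a + (d a b + d b v) := by
  rw [hadd u v a (hG.onPath_of_reachable_deleteEdges hab hu hv).1,
    hadd a v b (hG.onPath_of_reachable_deleteEdges hab .rfl hv).2]

variable {X : Set V} {Sg : V → V}

lemma surrogate_reachable_deleteEdges (hG : G.IsTree) (hsymm : ∀ u v : V, d u v = d v u)
    (hadd : ∀ a b c : V, G.OnPath a b c → d a b = d a c + d c b) (hSgX : ∀ v : V, Sg v ∈ X)
    (hSgmin : ∀ (v x : V), x ∈ X → x ≠ Sg v → d v (Sg v) < d v x)
    {a b : V} (hab : G.Adj a b) (hab_nonneg : 0 ≤ d a b) (hne : Sg a ≠ Sg b) :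
    (G.deleteEdges {s(a, b)}).Reachable a (Sg a) := by
  by_contra hxa
  have hxb := (hG.connected.preconnected.reachable_deleteEdges_or a b (Sg a)).resolve_left hxa
  have hdecomp {u v : V} :=
    dist_eq_add_add_of_reachable_deleteEdges (u := u) (v := v) hG.isAcyclic hadd hab
  have haa := dist_self_eq_zero_of_onPath_additive hadd a
  have hbb := dist_self_eq_zero_of_onPath_additive hadd b
  have hax := hdecomp .rfl hxb
  have hb_min := hSgmin b (Sg a) (hSgX a) hne
  have ha_min := hSgmin a (Sg b) (hSgX b) hne.symm
  rcases hG.connected.preconnected.reachable_deleteEdges_or a b (Sg b) with hya | hyb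
  · linarith [hdecomp hya .rfl, hsymm b (Sg b), hsymm a (Sg b)]
  · linarith [hdecomp .rfl hyb]

lemma dist_surrogate_lt_of_crossing (hG : G.IsAcyclic) (hsymm : ∀ u v : V, d u v = d v u)
    (hadd : ∀ a b c : V, G.OnPath a b c → d a b = d a c + d c b)
    (hSgmin : ∀ (v x : V), x ∈ X → x ≠ Sg v → d v (Sg v) < d v x)
    {a b : V} (hab : G.Adj a b) (hxa : (G.deleteEdges {s(a, b)}).Reachable a (Sg a))
    (hyb : (G.deleteEdges {s(a, b)}).Reachable b (Sg b)) {u v : V} (hu : u ∈ X) (hv : v ∈ X)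
    (hua : (G.deleteEdges {s(a, b)}).Reachable a u) (hvb : (G.deleteEdges {s(a, b)}).Reachable b v)
    (hne : (u, v) ≠ (Sg a, Sg b)) :
    d (Sg a) (Sg b) < d u v := by
  have hle_a : d a (Sg a) ≤ d a u := by
    rcases eq_or_ne u (Sg a) with rfl | h
    exacts [le_rfl, (hSgmin a u hu h).le]
  have hle_b : d b (Sg b) ≤ d b v := by
    rcases eq_or_ne v (Sg b) with rfl | h
    exacts [le_rfl, (hSgmin b v hv h).le]
  have hlt : d a (Sg a) + d b (Sg b) < d a u + d b v := by
    rcases not_and_or.mp (mt Prod.ext_iff.mpr hne) with h | h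
    · linarith [hSgmin a u hu h]
    · linarith [hSgmin b v hv h]
  rw [dist_eq_add_add_of_reachable_deleteEdges hG hadd hab hxa hyb,
    dist_eq_add_add_of_reachable_deleteEdges hG hadd hab hua hvb]
  linarith [hsymm a (Sg a), hsymm a u]

end LatentTree

theorem mst_surrogate_neighborhood_preservation_general
    {V : Type*} [Fintype V] (G : SimpleGraph V) (hT : G.IsTree)
    (d : V → V → ℝ)
    (hsymm : ∀ u v : V, d u v = d v u)
    (hadd : ∀ a b c : V, G.OnPath a b c → d a b = d a c + d c b)
    (hpos : ∀ u v : V, G.Adj u v → 0 < d u v)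
    (X : Set V)
    (Sg : V → V) (hSgX : ∀ v : V, Sg v ∈ X)
    (hSgmin : ∀ (v x : V), x ∈ X → x ≠ Sg v → d v (Sg v) < d v x)
    (M : SimpleGraph {v // v ∈ X}) (hM : M.IsTree)
    -- `M` is a minimum weight spanning tree over `X` ...
    (hMmin : ∀ H : SimpleGraph {v // v ∈ X}, H.IsTree →
      treeWeight (fun u v => d u.1 v.1) M ≤ treeWeight (fun u v => d u.1 v.1) H) :
    ∀ hi hj : V, G.Adj hi hj →
      Sg hi = Sg hj ∨ M.Adj ⟨Sg hi, hSgX hi⟩ ⟨Sg hj, hSgX hj⟩ := by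
  intro hi hj hij
  refine or_iff_not_imp_left.mpr fun hne => ?_
  have hx := surrogate_reachable_deleteEdges hT hsymm hadd hSgX hSgmin hij (hpos _ _ hij).le hne
  have hy : (G.deleteEdges {s(hi, hj)}).Reachable hj (Sg hj) := by
    simpa only [Sym2.eq_swap] using surrogate_reachable_deleteEdges hT hsymm hadd hSgX hSgmin
      hij.symm (hpos _ _ hij.symm).le (Ne.symm hne)
  refine hM.adj_of_forall_crossing_lt (fun a b => hsymm a.1 b.1) hMmin
    (S := {w | (G.deleteEdges {s(hi, hj)}).Reachable hi w.1}) hx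
    (fun h => hT.isAcyclic.not_reachable_deleteEdges hij (h.trans hy.symm)) ?_
  rintro u hu v hv huv
  have hvj := (hT.connected.preconnected.reachable_deleteEdges_or hi hj v).resolve_left hv
  exact dist_surrogate_lt_of_crossing hT.isAcyclic hsymm hadd hSgmin hij hx hy u.2 v.2 hu hvj
    (by simpa [Prod.ext_iff, Subtype.ext_iff] using huv)

/-- MST surrogate neighborhood preservation: contracting hidden nodes of the
latent tree to their (unique closest observed) surrogates respects the unique
minimum spanning tree over the observed nodes.  For every edge `(h_i, h_j)` of
the latent tree, either the surrogates coincide, or they are adjacent in the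
MST of the observed nodes under the additive distance `d`. -/
theorem mst_surrogate_neighborhood_preservation
    {V : Type*} [Fintype V] (G : SimpleGraph V) (hT : G.IsTree)
    (d : V → V → ℝ)
    (hsymm : ∀ u v : V, d u v = d v u)
    (hadd : ∀ a b c : V, G.OnPath a b c → d a b = d a c + d c b)
    (hpos : ∀ u v : V, G.Adj u v → 0 < d u v)
    (X : Set V)
    (Sg : V → V) (hSgX : ∀ v : V, Sg v ∈ X)
    (hSgmin : ∀ (v x : V), x ∈ X → x ≠ Sg v → d v (Sg v) < d v x)
    (M : SimpleGraph {v // v ∈ X}) (hM : M.IsTree)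
    -- `M` is a minimum weight spanning tree over `X` ...
    (hMmin : ∀ H : SimpleGraph {v // v ∈ X}, H.IsTree →
      treeWeight (fun u v => d u.1 v.1) M ≤ treeWeight (fun u v => d u.1 v.1) H)
    -- ... and it is the unique one
    (hMuniq : ∀ H : SimpleGraph {v // v ∈ X}, H.IsTree →
      treeWeight (fun u v => d u.1 v.1) H = treeWeight (fun u v => d u.1 v.1) M →
        H = M) :
    ∀ hi hj : V, G.Adj hi hj →
      Sg hi = Sg hj ∨ M.Adj ⟨Sg hi, hSgX hi⟩ ⟨Sg hj, hSgX hj⟩ :=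
  mst_surrogate_neighborhood_preservation_general G hT d hsymm hadd hpos X Sg hSgX hSgmin M hM hMmin
end
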